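/- arXiv:2309.15784 — 3 statements merged into one kernel-verified Lean document; each statement's English description precedes it below -/
import Mathlib

section
/- (Uncontrolled motion under EIC-based control.) Let m < n, let U be an m × m real orthogonal matrix, V an n × n real orthogonal matrix, Λ⁺ the n × m matrix whose top m × m block is diag(1/σ₁, …, 1/σ_m) with all σᵢ > 0 and whose bottom (n−m) × m block is zero. Suppose q_a : ℝ → ℝⁿ is twice differentiable and satisfies q̈_a(t) = −V Λ⁺ Uᵀ w(t) for all t, for some function w : ℝ → ℝᵐ. Define p_a(t) := Vᵀ q_a(t). Then for every index j with m < j ≤ n, the j-th component of p_a has identically zero second derivative; consequently p_{a,j}(t) = p_{a,j}(0) + t · ṗ_{a,j}(0) for all t, i.e. the motion of these coordinates is unaffected by w. -/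
/-!
The control acts on the actuated coordinates only through the range of `V Λ⁺`. Since `V` is
orthogonal, `p̈_a = Vᵀ q̈_a = -Λ⁺ Uᵀ w`, and the rows of `Λ⁺` of index `j ≥ m` vanish. So those
components of `p_a` have zero acceleration, and a function on `ℝ` with vanishing second
derivative is affine.
-/

open Matrix

section Calculus

variable {E F : Type*} [NormedAddCommGroup E] [NormedSpace ℝ E]
  [NormedAddCommGroup F] [NormedSpace ℝ F]

theorem ContinuousLinearMap.deriv_comp_of_differentiable (L : E →L[ℝ] F) {f : ℝ → E}
    (hf : Differentiable ℝ f) : deriv (fun s => L (f s)) = fun s => L (deriv f s) :=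
  funext fun s => (L.hasFDerivAt.comp_hasDerivAt s (hf s).hasDerivAt).deriv

theorem eq_add_smul_deriv_of_deriv_deriv_eq_zero {f : ℝ → E} (hf : Differentiable ℝ f)
    (hf' : Differentiable ℝ (deriv f)) (h : ∀ x, deriv (deriv f) x = 0) (t : ℝ) :
    f t = f 0 + t • deriv f 0 := by
  have hconst : ∀ s, deriv f s = deriv f 0 := fun s => is_const_of_deriv_eq_zero hf' h s 0
  have hg : ∀ s, HasDerivAt (fun s : ℝ => f s - s • deriv f 0) 0 s := fun s => by
    have := (hf s).hasDerivAt.sub ((hasDerivAt_id' s).smul_const (deriv f 0))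
    rwa [hconst s, one_smul, sub_self] at this
  have := is_const_of_deriv_eq_zero (fun s => (hg s).differentiableAt) (fun s => (hg s).deriv) t 0
  rw [zero_smul, sub_zero, sub_eq_iff_eq_add] at this
  rw [this, add_comm]

end Calculus

theorem Matrix.mul_mulVec_apply_eq_zero_of_row_eq_zero {ι κ μ R : Type*} [Fintype κ]
    [Fintype μ] [NonUnitalNonAssocSemiring R] {A : Matrix ι κ R} {j : ι} (hA : A j = 0)
    (B : Matrix κ μ R) (x : μ → R) : ((A * B) *ᵥ x) j = 0 := by
  simp [mulVec, dotProduct, mul_apply, hA]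

theorem stmt_2_general (m n : ℕ)
    (U : Matrix (Fin m) (Fin m) ℝ) (V : Matrix (Fin n) (Fin n) ℝ)
    (hV : Vᵀ * V = 1)
    (σ : Fin m → ℝ)
    (Λp : Matrix (Fin n) (Fin m) ℝ)
    (hΛp : ∀ (i : Fin n) (j : Fin m), Λp i j = if (i : ℕ) = (j : ℕ) then (σ j)⁻¹ else 0)
    (qa : ℝ → (Fin n → ℝ)) (w : ℝ → (Fin m → ℝ))
    (hqa : Differentiable ℝ qa) (hqa' : Differentiable ℝ (deriv qa))
    (hode : ∀ t : ℝ, deriv (deriv qa) t = -(V * Λp * Uᵀ).mulVec (w t)) :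
    ∀ j : Fin n, m ≤ (j : ℕ) →
      (∀ t : ℝ, deriv (deriv (fun s => Vᵀ.mulVec (qa s) j)) t = 0) ∧
      (∀ t : ℝ, Vᵀ.mulVec (qa t) j =
        Vᵀ.mulVec (qa 0) j + t * deriv (fun s => Vᵀ.mulVec (qa s) j) 0) := by
  intro j hj
  let pj : (Fin n → ℝ) →L[ℝ] ℝ := (LinearMap.proj j ∘ₗ Vᵀ.mulVecLin).toContinuousLinearMap
  have hrow : Λp j = 0 := funext fun k => by rw [hΛp, if_neg (by omega)]; rfl
  have hzero : ∀ t, deriv (deriv fun s => pj (qa s)) t = 0 := fun t => by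
    rw [pj.deriv_comp_of_differentiable hqa, pj.deriv_comp_of_differentiable hqa']
    change (Vᵀ *ᵥ deriv (deriv qa) t) j = 0
    rw [hode, mulVec_neg, mulVec_mulVec, ← Matrix.mul_assoc, ← Matrix.mul_assoc, hV,
      Matrix.one_mul, Pi.neg_apply, mul_mulVec_apply_eq_zero_of_row_eq_zero hrow, neg_zero]
  have hderiv : Differentiable ℝ (deriv fun s => pj (qa s)) := by
    rw [pj.deriv_comp_of_differentiable hqa]
    exact pj.differentiable.comp hqa'
  exact ⟨hzero, eq_add_smul_deriv_of_deriv_deriv_eq_zero (pj.differentiable.comp hqa) hderiv hzero⟩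

/-- (Uncontrolled motion under EIC-based control.)  Let `m < n`, `U` an
`m × m` orthogonal matrix, `V` an `n × n` orthogonal matrix, and `Λ⁺` the `n × m` matrix
whose top `m × m` block is `diag(1/σ₁, …, 1/σ_m)` (all `σᵢ > 0`) and whose bottom
`(n−m) × m` block is zero.  If `q_a : ℝ → ℝⁿ` is twice differentiable with
`q̈_a(t) = −V Λ⁺ Uᵀ w(t)` for all `t`, and `p_a(t) := Vᵀ q_a(t)`, then for every index
`j` with `m ≤ j` (0-based, i.e. `m < j ≤ n` in 1-based indexing) the `j`-th component of
`p_a` has identically zero second derivative, and consequently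
`p_{a,j}(t) = p_{a,j}(0) + t ṗ_{a,j}(0)` for all `t`. -/
theorem stmt_2 (m n : ℕ) (hmn : m < n)
    (U : Matrix (Fin m) (Fin m) ℝ) (V : Matrix (Fin n) (Fin n) ℝ)
    (hU : Uᵀ * U = 1) (hV : Vᵀ * V = 1)
    (σ : Fin m → ℝ) (hσ : ∀ i, 0 < σ i)
    (Λp : Matrix (Fin n) (Fin m) ℝ)
    (hΛp : ∀ (i : Fin n) (j : Fin m), Λp i j = if (i : ℕ) = (j : ℕ) then (σ j)⁻¹ else 0)
    (qa : ℝ → (Fin n → ℝ)) (w : ℝ → (Fin m → ℝ))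
    (hqa : Differentiable ℝ qa) (hqa' : Differentiable ℝ (deriv qa))
    (hode : ∀ t : ℝ, deriv (deriv qa) t = -(V * Λp * Uᵀ).mulVec (w t)) :
    ∀ j : Fin n, m ≤ (j : ℕ) →
      (∀ t : ℝ, deriv (deriv (fun s => Vᵀ.mulVec (qa s) j)) t = 0) ∧
      (∀ t : ℝ, Vᵀ.mulVec (qa t) j =
        Vᵀ.mulVec (qa 0) j + t * deriv (fun s => Vᵀ.mulVec (qa s) j) 0) :=
  stmt_2_general m n U V hV σ Λp hΛp qa w hqa hqa' hode
end

section
/- (Exact feedback linearization of the PEIC-based control.) Let m < n. Let D_aa^a be (n−m)×(n−m), D_aa^{au} and D_au^a be (n−m)×m, D_aa^{ua} be m×(n−m), D_aa^u, D_au^u, D_ua^u, D_uu be m×m, and D_ua^a be m×(n−m) real matrices, with D_aa^a, D_aa^u, D_ua^u, and D_uu invertible. Let q̈_{aa} ∈ ℝ^{n−m}, q̈_{au}, q̈_u ∈ ℝᵐ, H_{aa} ∈ ℝ^{n−m}, H_{au}, H_u ∈ ℝᵐ be vectors, and let v_a ∈ ℝ^{n−m}, v_u ∈ ℝᵐ be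 arbitrary auxiliary controls. Define H_{an}^a = D_aa^{au} q̈_{au} + D_au^a q̈_u + H_{aa}, H_{an}^u = D_aa^{ua} q̈_{aa} + H_{au}, H_{un} = D_ua^a q̈_{aa} + H_u, v^{int} = −(D_ua^u)⁻¹ (H_{un} + D_uu v_u), u_a = D_aa^a v_a + H_{an}^a, and u_u = D_aa^u v^{int} + D_au^u q̈_u + H_{an}^u. If the three system equations hold: (i) D_aa^a q̈_{aa} + D_aa^{au} q̈_{au} + D_au^a q̈_u + H_{aa} = u_a, (ii) D_aa^{ua} q̈_{aa} + D_aa^u q̈_{au} + D_au^u q̈_u + H_{au} = u_u, (iii) D_ua^a q̈_{aa} + D_ua^u q̈_{au} + D_uu q̈_u + H_u = 0, then q̈_{aa} = v_a, q̈_{au} = v^{int}, and q̈_u = v_u. -/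
open Matrix

/-- (Exact feedback linearization of the PEIC-based control.)  With the
partitioned inertia blocks, nonlinear terms, accelerations `q̈_{aa}, q̈_{au}, q̈_u`, and
auxiliary controls `v_a, v_u`, define `H_an^a, H_an^u, H_un, v^{int}, u_a, u_u` as in the
PEIC control law.  If the three subsystem equations (i)–(iii) hold, then
`q̈_{aa} = v_a`, `q̈_{au} = v^{int}`, and `q̈_u = v_u`. -/
theorem stmt_13 (m n : ℕ) (hmn : m < n)
    (Daa_a : Matrix (Fin (n - m)) (Fin (n - m)) ℝ)
    (Daa_au Dau_a : Matrix (Fin (n - m)) (Fin m) ℝ)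
    (Daa_ua : Matrix (Fin m) (Fin (n - m)) ℝ)
    (Daa_u Dau_u Dua_u Duu : Matrix (Fin m) (Fin m) ℝ)
    (Dua_a : Matrix (Fin m) (Fin (n - m)) ℝ)
    (hDaa_a : IsUnit Daa_a) (hDaa_u : IsUnit Daa_u)
    (hDua_u : IsUnit Dua_u) (hDuu : IsUnit Duu)
    (ddqaa : Fin (n - m) → ℝ) (ddqau ddqu : Fin m → ℝ)
    (Haa : Fin (n - m) → ℝ) (Hau Hu : Fin m → ℝ)
    (va : Fin (n - m) → ℝ) (vu : Fin m → ℝ)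
    (Han_a : Fin (n - m) → ℝ)
    (hHan_a : Han_a = Daa_au.mulVec ddqau + Dau_a.mulVec ddqu + Haa)
    (Han_u : Fin m → ℝ) (hHan_u : Han_u = Daa_ua.mulVec ddqaa + Hau)
    (Hun : Fin m → ℝ) (hHun : Hun = Dua_a.mulVec ddqaa + Hu)
    (vint : Fin m → ℝ) (hvint : vint = -(Dua_u⁻¹.mulVec (Hun + Duu.mulVec vu)))
    (ua : Fin (n - m) → ℝ) (hua : ua = Daa_a.mulVec va + Han_a)
    (uu : Fin m → ℝ) (huu : uu = Daa_u.mulVec vint + Dau_u.mulVec ddqu + Han_u)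
    (heq1 : Daa_a.mulVec ddqaa + Daa_au.mulVec ddqau + Dau_a.mulVec ddqu + Haa = ua)
    (heq2 : Daa_ua.mulVec ddqaa + Daa_u.mulVec ddqau + Dau_u.mulVec ddqu + Hau = uu)
    (heq3 : Dua_a.mulVec ddqaa + Dua_u.mulVec ddqau + Duu.mulVec ddqu + Hu = 0) :
    ddqaa = va ∧ ddqau = vint ∧ ddqu = vu := by
  have inj_a := mulVec_injective_iff_isUnit.mpr hDaa_a
  have inj_u := mulVec_injective_iff_isUnit.mpr hDaa_u
  have inj_uu := mulVec_injective_iff_isUnit.mpr hDuu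
  have haa : ddqaa = va := by
    apply inj_a
    rw [hua, hHan_a] at heq1
    linear_combination heq1
  have hau : ddqau = vint := by
    apply inj_u
    rw [huu, hHan_u] at heq2
    linear_combination heq2
  refine ⟨haa, hau, ?_⟩
  apply inj_uu
  have hinv : Dua_u * Dua_u⁻¹ = 1 :=
    Matrix.mul_nonsing_inv _ ((Matrix.isUnit_iff_isUnit_det _).mp hDua_u)
  have hvint' : Dua_u.mulVec vint = -(Hun + Duu.mulVec vu) := by
    rw [hvint, Matrix.mulVec_neg, Matrix.mulVec_mulVec, hinv, Matrix.one_mulVec]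
  rw [hau] at heq3
  rw [hHun] at hvint'
  linear_combination heq3 - hvint'
end

section
/- (Perturbed PEIC closed loop under GP model error.) Let m < n, and let D_aa^a, D_aa^{au}, D_au^a, D_aa^{ua}, D_aa^u, D_au^u, D_ua^a, D_ua^u, D_uu be real matrices of sizes as follows: D_aa^a is (n−m)×(n−m), D_aa^{au} and D_au^a are (n−m)×m, D_aa^{ua} is m×(n−m), and D_aa^u, D_au^u, D_ua^u, D_uu are m×m, D_ua^a is m×(n−m), with D_aa^a, D_aa^u, D_ua^u, D_uu invertible. Let q̈_{aa} ∈ ℝ^{n−m}, q̈_{au}, q̈_u ∈ ℝᵐ, H_{aa} ∈ ℝ^{n−m}, H_{au}, H_u ∈ ℝᵐ, model errors Δ_{aa} ∈ ℝ^{n−m}, Δ_{au}, Δ_u ∈ ℝᵐ, and auxiliary controls v_a ∈ ℝ^{n−m}, v_u ∈ ℝᵐ. Define H_{an}^a = D_aa^{au} q̈_{au} + D_au^a q̈_u + H_{aa}, H_{an}^u = D_aa^{ua} q̈_{aa} + H_{au}, H_{un} = D_ua^a q̈_{aa} + H_u, v^{int} = −(D_ua^u)⁻¹ (H_{un} + D_uu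 v_u), u_a = D_aa^a v_a + H_{an}^a, u_u = D_aa^u v^{int} + D_au^u q̈_u + H_{an}^u. If the true system satisfies (i) D_aa^a q̈_{aa} + D_aa^{au} q̈_{au} + D_au^a q̈_u + H_{aa} + Δ_{aa} = u_a, (ii) D_aa^{ua} q̈_{aa} + D_aa^u q̈_{au} + D_au^u q̈_u + H_{au} + Δ_{au} = u_u, and (iii) D_ua^a q̈_{aa} + D_ua^u q̈_{au} + D_uu q̈_u + H_u + Δ_u = 0, then q̈_{aa} = v_a − (D_aa^a)⁻¹ Δ_{aa}, q̈_{au} = v^{int} − (D_aa^u)⁻¹ Δ_{au}, and q̈_u = v_u − D_uu⁻¹ ( Δ_u − D_ua^u (D_aa^u)⁻¹ Δ_{au} ). -/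
open Matrix

private lemma mulVec_cancel {k : ℕ} {A : Matrix (Fin k) (Fin k) ℝ} (hA : IsUnit A)
    {x y : Fin k → ℝ} (h : A.mulVec x = A.mulVec y) : x = y := by
  have := congrArg (fun v => A⁻¹.mulVec v) h
  simpa [Matrix.mulVec_mulVec, Matrix.nonsing_inv_mul A
    ((Matrix.isUnit_iff_isUnit_det A).mp hA)] using this

/-- (Perturbed PEIC closed loop under GP model error.)  With the
partitioned inertia blocks, nonlinear terms, accelerations, GP model errors
`Δ_{aa}, Δ_{au}, Δ_u`, and auxiliary controls `v_a, v_u`, define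
`H_an^a, H_an^u, H_un, v^{int}, u_a, u_u` by the PEIC control law computed from the
nominal model.  If the true system satisfies the perturbed equations (i)–(iii), then
`q̈_{aa} = v_a − (D_aa^a)⁻¹ Δ_{aa}`, `q̈_{au} = v^{int} − (D_aa^u)⁻¹ Δ_{au}`, and
`q̈_u = v_u − D_uu⁻¹ (Δ_u − D_ua^u (D_aa^u)⁻¹ Δ_{au})`. -/
theorem stmt_15 (m n : ℕ) (hmn : m < n)
    (Daa_a : Matrix (Fin (n - m)) (Fin (n - m)) ℝ)
    (Daa_au Dau_a : Matrix (Fin (n - m)) (Fin m) ℝ)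
    (Daa_ua : Matrix (Fin m) (Fin (n - m)) ℝ)
    (Daa_u Dau_u Dua_u Duu : Matrix (Fin m) (Fin m) ℝ)
    (Dua_a : Matrix (Fin m) (Fin (n - m)) ℝ)
    (hDaa_a : IsUnit Daa_a) (hDaa_u : IsUnit Daa_u)
    (hDua_u : IsUnit Dua_u) (hDuu : IsUnit Duu)
    (ddqaa : Fin (n - m) → ℝ) (ddqau ddqu : Fin m → ℝ)
    (Haa : Fin (n - m) → ℝ) (Hau Hu : Fin m → ℝ)
    (Δaa : Fin (n - m) → ℝ) (Δau Δu : Fin m → ℝ)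
    (va : Fin (n - m) → ℝ) (vu : Fin m → ℝ)
    (Han_a : Fin (n - m) → ℝ)
    (hHan_a : Han_a = Daa_au.mulVec ddqau + Dau_a.mulVec ddqu + Haa)
    (Han_u : Fin m → ℝ) (hHan_u : Han_u = Daa_ua.mulVec ddqaa + Hau)
    (Hun : Fin m → ℝ) (hHun : Hun = Dua_a.mulVec ddqaa + Hu)
    (vint : Fin m → ℝ) (hvint : vint = -(Dua_u⁻¹.mulVec (Hun + Duu.mulVec vu)))
    (ua : Fin (n - m) → ℝ) (hua : ua = Daa_a.mulVec va + Han_a)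
    (uu : Fin m → ℝ) (huu : uu = Daa_u.mulVec vint + Dau_u.mulVec ddqu + Han_u)
    (heq1 : Daa_a.mulVec ddqaa + Daa_au.mulVec ddqau + Dau_a.mulVec ddqu + Haa + Δaa = ua)
    (heq2 : Daa_ua.mulVec ddqaa + Daa_u.mulVec ddqau + Dau_u.mulVec ddqu + Hau + Δau = uu)
    (heq3 : Dua_a.mulVec ddqaa + Dua_u.mulVec ddqau + Duu.mulVec ddqu + Hu + Δu = 0) :
    ddqaa = va - Daa_a⁻¹.mulVec Δaa ∧
    ddqau = vint - Daa_u⁻¹.mulVec Δau ∧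
    ddqu = vu - Duu⁻¹.mulVec (Δu - (Dua_u * Daa_u⁻¹).mulVec Δau) := by
  have h1 : ddqaa = va - Daa_a⁻¹.mulVec Δaa := by
    apply mulVec_cancel hDaa_a
    have : Daa_a.mulVec ddqaa = Daa_a.mulVec va - Δaa := by
      have := heq1
      rw [hua, hHan_a] at this
      linear_combination (norm := (ext i; simp [Matrix.mulVec, Pi.add_apply]; ring)) this
    rw [this]
    have hinv : Daa_a.mulVec (Daa_a⁻¹.mulVec Δaa) = Δaa := by
      rw [Matrix.mulVec_mulVec, Matrix.mul_nonsing_inv Daa_a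
        ((Matrix.isUnit_iff_isUnit_det Daa_a).mp hDaa_a), Matrix.one_mulVec]
    rw [Matrix.mulVec_sub, hinv]
  have h2 : ddqau = vint - Daa_u⁻¹.mulVec Δau := by
    apply mulVec_cancel hDaa_u
    have : Daa_u.mulVec ddqau = Daa_u.mulVec vint - Δau := by
      have := heq2
      rw [huu, hHan_u] at this
      linear_combination (norm := (ext i; simp [Matrix.mulVec, Pi.add_apply]; ring)) this
    rw [this]
    have hinv : Daa_u.mulVec (Daa_u⁻¹.mulVec Δau) = Δau := by
      rw [Matrix.mulVec_mulVec, Matrix.mul_nonsing_inv Daa_u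
        ((Matrix.isUnit_iff_isUnit_det Daa_u).mp hDaa_u), Matrix.one_mulVec]
    rw [Matrix.mulVec_sub, hinv]
  have hvint2 : Dua_u.mulVec vint = -(Hun + Duu.mulVec vu) := by
    rw [hvint, Matrix.mulVec_neg, Matrix.mulVec_mulVec, Matrix.mul_nonsing_inv Dua_u
      ((Matrix.isUnit_iff_isUnit_det Dua_u).mp hDua_u), Matrix.one_mulVec]
  have h3 : ddqu = vu - Duu⁻¹.mulVec (Δu - (Dua_u * Daa_u⁻¹).mulVec Δau) := by
    apply mulVec_cancel hDuu
    have key : Duu.mulVec ddqu = Duu.mulVec vu - (Δu - (Dua_u * Daa_u⁻¹).mulVec Δau) := by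
      have e3 := heq3
      rw [hHun] at hvint2
      have hdd : Dua_u.mulVec ddqau = Dua_u.mulVec vint - (Dua_u * Daa_u⁻¹).mulVec Δau := by
        rw [h2, Matrix.mulVec_sub, Matrix.mulVec_mulVec]
      rw [hdd, hvint2] at e3
      linear_combination (norm := (ext i; simp [Matrix.mulVec, Pi.add_apply]; ring)) e3
    rw [key]
    have hinv : Duu.mulVec (Duu⁻¹.mulVec (Δu - (Dua_u * Daa_u⁻¹).mulVec Δau)) = (Δu - (Dua_u * Daa_u⁻¹).mulVec Δau) := by
      rw [Matrix.mulVec_mulVec, Matrix.mul_nonsing_inv Duu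
        ((Matrix.isUnit_iff_isUnit_det Duu).mp hDuu), Matrix.one_mulVec]
    rw [Matrix.mulVec_sub, hinv]
  exact ⟨h1, h2, h3⟩
end
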